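/- arXiv:0709.3278 — 2 statements merged into one kernel-verified Lean document; each statement's English description precedes it below -/
import Mathlib

section
/- Let φ′ be a continuous flow on a second compact metric space (E′, d′), let V′ be a finite-dimensional real normed vector space and b a V′-valued cocycle over φ′. Suppose π : E → E′ is a continuous map with π(t·x) = t·π(x) for all t ∈ 𝕋, x ∈ E, and p : V → V′ is a linear map such that b(t, π(x)) = p(a(t,x)) for all t ∈ 𝕋, x ∈ E. If M ⊆ E is a chain component of φ and π(M) is a chain component of φ′, then Λ_Mo(π(M), b) = p(Λ_Mo(M, a)), where the notation indicates which cocycle is used to form the Morse spectrum. -/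
open Filter Topology

section

variable {E : Type*} [MetricSpace E] [CompactSpace E]
variable {V : Type*} [NormedAddCommGroup V] [NormedSpace ℝ V] [FiniteDimensional ℝ V]

/-- `a` is a continuous `V`-valued cocycle over the flow `φ`. -/
def IsAddCocycle (φ : Flow ℝ E) (a : ℝ → E → V) : Prop :=
  Continuous (fun p : ℝ × E => a p.1 p.2) ∧
    ∀ t s x, a (t + s) x = a t (φ s x) + a s x

/-- `(N, x, t)` is an `(ε, T)`-chain of the flow `φ` from `p` to `q`:
points `x 0 = p, x 1, …, x N = q` and times `t 0, …, t (N-1)` with `t i ≥ T`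
and `dist (φ (t i) (x i)) (x (i+1)) < ε`. -/
def IsFlowChain (φ : Flow ℝ E) (ε T : ℝ) (N : ℕ) (x : ℕ → E) (t : ℕ → ℝ) (p q : E) : Prop :=
  0 < N ∧ x 0 = p ∧ x N = q ∧ (∀ i < N, T ≤ t i) ∧
    ∀ i < N, dist (φ (t i) (x i)) (x (i + 1)) < ε

/-- The finite-time Morse exponent of a chain:
`(1 / (t 0 + ⋯ + t (N-1))) • (a (t 0) (x 0) + ⋯ + a (t (N-1)) (x (N-1)))`. -/
noncomputable def chainExp (a : ℝ → E → V) (N : ℕ) (x : ℕ → E) (t : ℕ → ℝ) : V :=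
  (∑ i ∈ Finset.range N, t i)⁻¹ • ∑ i ∈ Finset.range N, a (t i) (x i)

/-- The Morse spectrum of `M ⊆ E`: intersection over `ε, T > 0` of the closures
of the sets of finite-time Morse exponents of `(ε,T)`-chains belonging to `M`. -/
noncomputable def morseSpec (φ : Flow ℝ E) (a : ℝ → E → V) (M : Set E) : Set V :=
  ⋂ (ε : ℝ) (_ : 0 < ε) (T : ℝ) (_ : 0 < T), closure
    {v | ∃ N x t, ∃ p ∈ M, ∃ q ∈ M, IsFlowChain φ ε T N x t p q ∧ v = chainExp a N x t}

/-- `M` is chain transitive: any two points of `M` are joined by `(ε,T)`-chains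
for all `ε, T > 0`. -/
def IsChainTransitiveSet (φ : Flow ℝ E) (M : Set E) : Prop :=
  ∀ p ∈ M, ∀ q ∈ M, ∀ ε > (0:ℝ), ∀ T > (0:ℝ), ∃ N x t, IsFlowChain φ ε T N x t p q

/-- A chain component is a maximal chain transitive subset. -/
def IsChainComponent (φ : Flow ℝ E) (M : Set E) : Prop :=
  IsChainTransitiveSet φ M ∧
    ∀ M' : Set E, IsChainTransitiveSet φ M' → M ⊆ M' → M = M'

/-!
The inclusion `p '' Λ_Mo(M) ⊆ Λ_Mo(π '' M)` holds because the uniformly continuous `π` maps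
fine chains in `M` to fine chains in `π '' M`, and `b ∘ π = p ∘ a` maps their exponents along.

For the converse, the key fact is that sufficiently fine chains between points of a chain
component stay, along their whole orbit pieces, in any given neighbourhood of it: otherwise a
limit of escaping orbit points would be chain equivalent to the component. So a fine chain of
`φ'` in `π '' M`, with its steps cut into pieces of length in `[S, 2S]`, stays `η`-close to
`π '' M`. Lifting its points to `M`, following `φ` for the same times and returning to the next
lift by a chain of total time at most `C` (compactness of `M × M`) gives a chain of `φ` in `M`
whose exponent is mapped by `p` to within `O((1 + C) / S)` of the given one. Compactness of the
bounded sets of exponents in `V` then yields an exact preimage.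
-/

open Finset Relation

theorem exists_nat_one_div_le_and_le {δ : ℝ} (hδ : 0 < δ) (T : ℝ) :
    ∃ n : ℕ, 1 / (n + 1 : ℝ) ≤ δ ∧ T ≤ n + 1 := by
  obtain ⟨m, hm⟩ := exists_nat_one_div_lt hδ
  obtain ⟨k, hk⟩ := exists_nat_ge T
  refine ⟨max m k, (one_div_le_one_div_of_le (by positivity) ?_).trans hm.le, ?_⟩
  · exact_mod_cast Nat.add_le_add_right (le_max_left m k) 1
  · exact hk.trans (by exact_mod_cast (le_max_right m k).trans (Nat.le_succ _))

theorem Continuous.exists_pos_forall_dist_lt {X Y : Type*} [MetricSpace X] [CompactSpace X]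
    [PseudoMetricSpace Y] {f : ℝ → X → Y} (hf : Continuous (Function.uncurry f)) {I : Set ℝ}
    (hI : IsCompact I) {ε : ℝ} (hε : 0 < ε) :
    ∃ δ > 0, ∀ s ∈ I, ∀ u v, dist u v < δ → dist (f s u) (f s v) < ε := by
  obtain ⟨δ, hδ, h⟩ := Metric.uniformContinuousOn_iff.1
    ((hI.prod isCompact_univ).uniformContinuousOn_of_continuous hf.continuousOn) ε hε
  exact ⟨δ, hδ, fun s hs u v huv =>
    h (s, u) ⟨hs, trivial⟩ (s, v) ⟨hs, trivial⟩ (by simpa [Prod.dist_eq] using huv)⟩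

theorem norm_sum_le_mul_sum_of_norm_le {X W : Type*} [NormedAddCommGroup W] {a : ℝ → X → W}
    {K : ℝ} (hK : ∀ x t, 1 ≤ t → ‖a t x‖ ≤ K * t) {N : ℕ} {x : ℕ → X} {t : ℕ → ℝ}
    (ht : ∀ i < N, 1 ≤ t i) :
    ‖∑ i ∈ range N, a (t i) (x i)‖ ≤ K * ∑ i ∈ range N, t i := by
  rw [mul_sum]
  exact (norm_sum_le _ _).trans (sum_le_sum fun i hi => hK _ _ (ht i (mem_range.1 hi)))

theorem exists_forall_mem_closure_of_mem_closure_image {X Y : Type*} [TopologicalSpace X]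
    [T2Space X] [TopologicalSpace Y] [T2Space Y] {f : X → Y} (hf : Continuous f) {K : Set X}
    (hK : IsCompact K) {S : ℕ → Set X} (hS : Antitone S) (hSK : S 0 ⊆ K) {y : Y}
    (hy : ∀ n, y ∈ closure (f '' S n)) : ∃ x, (∀ n, x ∈ closure (S n)) ∧ f x = y := by
  have hcpt : ∀ n, IsCompact (closure (S n)) := fun n =>
    hK.of_isClosed_subset isClosed_closure (closure_minimal ((hS n.zero_le).trans hSK) hK.isClosed)
  have hne : ∀ n, (closure (S n) ∩ f ⁻¹' {y}).Nonempty := fun n => by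
    obtain ⟨x, hx, rfl⟩ : y ∈ f '' closure (S n) :=
      closure_minimal (Set.image_mono subset_closure) ((hcpt n).image hf).isClosed (hy n)
    exact ⟨x, hx, rfl⟩
  obtain ⟨x, hx⟩ := IsCompact.nonempty_iInter_of_sequence_nonempty_isCompact_isClosed _
    (fun n => Set.inter_subset_inter_left _ (closure_mono (hS n.le_succ))) hne
    ((hcpt 0).inter_right (isClosed_singleton.preimage hf))
    fun n => isClosed_closure.inter (isClosed_singleton.preimage hf)
  rw [Set.mem_iInter] at hx
  exact ⟨x, fun n => (hx n).1, (hx 0).2⟩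

/-- Compares the exponents `D⁻¹ • x`, `Θ⁻¹ • y` of two chains made of `n` blocks of length at
least `S`, each block perturbing the total time by at most `γ` and the sum by at most `α`. -/
theorem norm_inv_smul_sub_inv_smul_le {F : Type*} [NormedAddCommGroup F] [NormedSpace ℝ F]
    {x y : F} {n S Θ D α β γ : ℝ} (hn : 0 < n) (hS : 0 < S) (hΘ : n * S ≤ Θ) (hΘD : Θ ≤ D)
    (hD : D ≤ Θ + n * γ) (hxy : ‖x - y‖ ≤ n * α) (hy : ‖y‖ ≤ β * Θ) (hβ : 0 ≤ β) :
    ‖D⁻¹ • x - Θ⁻¹ • y‖ ≤ (α + β * γ) / S := by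
  have hΘ0 : 0 < Θ := (mul_pos hn hS).trans_le hΘ
  have hD0 : 0 < D := hΘ0.trans_le hΘD
  have hα : 0 ≤ α := nonneg_of_mul_nonneg_right ((norm_nonneg _).trans hxy) hn
  have hγ : 0 ≤ γ := nonneg_of_mul_nonneg_right (by linarith) hn
  have e : D⁻¹ • x - Θ⁻¹ • y = D⁻¹ • ((x - y) - ((D - Θ) / Θ) • y) := by
    rw [smul_sub, smul_sub, smul_smul, sub_sub, ← add_smul]
    congr 2
    field_simp
    ring
  have hyΘ : (D - Θ) / Θ * ‖y‖ ≤ (D - Θ) * β := by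
    rw [div_mul_eq_mul_div, div_le_iff₀ hΘ0]
    nlinarith
  rw [e, norm_smul, Real.norm_of_nonneg (inv_nonneg.2 hD0.le), ← div_eq_inv_mul,
    div_le_div_iff₀ hD0 hS]
  calc ‖x - y - ((D - Θ) / Θ) • y‖ * S ≤ (‖x - y‖ + (D - Θ) / Θ * ‖y‖) * S := by
        gcongr
        refine (norm_sub_le _ _).trans_eq ?_
        rw [norm_smul, Real.norm_of_nonneg (div_nonneg (by linarith) hΘ0.le)]
    _ ≤ (n * α + n * γ * β) * S := by
        refine mul_le_mul_of_nonneg_right ?_ hS.le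
        nlinarith [mul_le_mul_of_nonneg_right (show D - Θ ≤ n * γ by linarith) hβ]
    _ = (α + β * γ) * (n * S) := by ring
    _ ≤ (α + β * γ) * D := mul_le_mul_of_nonneg_left (hΘ.trans hΘD) (add_nonneg hα (by positivity))

section Chains

variable {X : Type*} [MetricSpace X] {φ : Flow ℝ X} {ε T : ℝ}

def seqAppend {α : Type*} (N : ℕ) (u v : ℕ → α) (i : ℕ) : α :=
  if i < N then u i else v (i - N)

theorem seqAppend_of_lt {α : Type*} {N i : ℕ} (u v : ℕ → α) (h : i < N) :
    seqAppend N u v i = u i :=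
  if_pos h

theorem seqAppend_add {α : Type*} (N i : ℕ) (u v : ℕ → α) : seqAppend N u v (N + i) = v i := by
  simp [seqAppend]

theorem sum_range_seqAppend {α β M : Type*} [AddCommMonoid M] (g : α → β → M) (N N' : ℕ)
    (t t' : ℕ → α) (x x' : ℕ → β) :
    ∑ i ∈ range (N + N'), g (seqAppend N t t' i) (seqAppend N x x' i) =
      ∑ i ∈ range N, g (t i) (x i) + ∑ i ∈ range N', g (t' i) (x' i) := by
  rw [sum_range_add]
  congr 1
  · exact sum_congr rfl fun i hi => by
      rw [seqAppend_of_lt _ _ (mem_range.1 hi), seqAppend_of_lt _ _ (mem_range.1 hi)]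
  · simp only [seqAppend_add]

theorem IsFlowChain.mono {ε' T' : ℝ} {N : ℕ} {x : ℕ → X} {t : ℕ → ℝ} {p q : X}
    (h : IsFlowChain φ ε T N x t p q) (hε : ε ≤ ε') (hT : T' ≤ T) :
    IsFlowChain φ ε' T' N x t p q :=
  ⟨h.1, h.2.1, h.2.2.1, fun i hi => hT.trans (h.2.2.2.1 i hi),
    fun i hi => (h.2.2.2.2 i hi).trans_le hε⟩

theorem isFlowChain_one {t₀ : ℝ} {p q : X} (ht₀ : T ≤ t₀) (hd : dist (φ t₀ p) q < ε) :
    IsFlowChain φ ε T 1 (fun i => if i = 0 then p else q) (fun _ => t₀) p q := by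
  refine ⟨one_pos, rfl, rfl, fun _ _ => ht₀, fun i hi => ?_⟩
  obtain rfl : i = 0 := by omega
  simpa using hd

theorem IsFlowChain.append {N N' : ℕ} {x x' : ℕ → X} {t t' : ℕ → ℝ} {p q r : X}
    (h : IsFlowChain φ ε T N x t p q) (h' : IsFlowChain φ ε T N' x' t' q r) :
    IsFlowChain φ ε T (N + N') (seqAppend N x x') (seqAppend N t t') p r := by
  obtain ⟨hN, hx0, hxN, ht, hd⟩ := h
  obtain ⟨hN', hx0', hxN', ht', hd'⟩ := h'
  have hx : ∀ i ≤ N, seqAppend N x x' i = x i := fun i hi => by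
    rcases hi.lt_or_eq with hi | rfl
    · exact seqAppend_of_lt _ _ hi
    · simpa [seqAppend] using hx0'.trans hxN.symm
  refine ⟨by omega, (hx 0 hN.le).trans hx0, by rw [seqAppend_add, hxN'], fun i hi => ?_,
    fun i hi => ?_⟩
  · rcases lt_or_ge i N with hi' | hi'
    · rw [seqAppend_of_lt _ _ hi']; exact ht i hi'
    · obtain ⟨k, rfl⟩ := Nat.exists_eq_add_of_le hi'
      rw [seqAppend_add]; exact ht' k (by omega)
  · rcases lt_or_ge i N with hi' | hi'
    · rw [seqAppend_of_lt _ _ hi', seqAppend_of_lt _ _ hi', hx (i + 1) hi']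
      exact hd i hi'
    · obtain ⟨k, rfl⟩ := Nat.exists_eq_add_of_le hi'
      rw [seqAppend_add, seqAppend_add, add_assoc, seqAppend_add]
      exact hd' k (by omega)

theorem exists_isFlowChain_concat {W : Type*} [AddCommMonoid W] (a : ℝ → X → W) {K : ℕ}
    (hK : 0 < K) {z : ℕ → X} {n : ℕ → ℕ} {y : ℕ → ℕ → X} {s : ℕ → ℕ → ℝ}
    (h : ∀ j < K, IsFlowChain φ ε T (n j) (y j) (s j) (z j) (z (j + 1))) :
    ∃ N x t, IsFlowChain φ ε T N x t (z 0) (z K) ∧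
      (∀ i < N, ∃ j < K, ∃ k < n j, t i = s j k ∧ x i = y j k) ∧
      ∑ i ∈ range N, t i = ∑ j ∈ range K, ∑ k ∈ range (n j), s j k ∧
      ∑ i ∈ range N, a (t i) (x i) = ∑ j ∈ range K, ∑ k ∈ range (n j), a (s j k) (y j k) := by
  induction K, hK using Nat.le_induction with
  | base => exact ⟨n 0, y 0, s 0, h 0 one_pos, fun i hi => ⟨0, one_pos, i, hi, rfl, rfl⟩,
      by rw [sum_range_one], by rw [sum_range_one]⟩
  | succ K hK ih =>
    obtain ⟨N, x, t, hchain, hsteps, htime, hsum⟩ := ih fun j hj => h j (by omega)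
    refine ⟨N + n K, _, _, hchain.append (h K (by omega)), fun i hi => ?_, ?_, ?_⟩
    · rcases lt_or_ge i N with hi' | hi'
      · obtain ⟨j, hj, k, hk, ht, hx⟩ := hsteps i hi'
        exact ⟨j, by omega, k, hk, by rw [seqAppend_of_lt _ _ hi', ht],
          by rw [seqAppend_of_lt _ _ hi', hx]⟩
      · obtain ⟨k, rfl⟩ := Nat.exists_eq_add_of_le hi'
        exact ⟨K, by omega, k, by omega, seqAppend_add .., seqAppend_add ..⟩
    · rw [sum_range_seqAppend (fun t (_ : X) => t) N (n K) t (s K) x (y K), sum_range_succ, htime]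
    · rw [sum_range_seqAppend a, sum_range_succ, hsum]

theorem IsFlowChain.eventually_isFlowChain_update {N : ℕ} {x : ℕ → X} {t : ℕ → ℝ} {p q : X}
    (h : IsFlowChain φ ε T N x t p q) :
    ∀ᶠ z : X × X in 𝓝 (p, q), IsFlowChain φ ε T N
      (fun i => if i = 0 then z.1 else if i = N then z.2 else x i) t z.1 z.2 := by
  obtain ⟨hN, hx0, hxN, ht, hd⟩ := h
  set x' : X × X → ℕ → X := fun z i => if i = 0 then z.1 else if i = N then z.2 else x i
  have hx' : ∀ i, Continuous fun z => x' z i := fun i => by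
    simp only [x']; split_ifs <;> fun_prop
  have hx'pq : x' (p, q) = x := funext fun i => by
    simp only [x']
    split_ifs with h0 hiN
    · rw [h0, hx0]
    · rw [hiN, hxN]
    · rfl
  have hsteps : ∀ᶠ z in 𝓝 (p, q), ∀ i ∈ range N, dist (φ (t i) (x' z i)) (x' z (i + 1)) < ε := by
    refine (eventually_all_finset _).2 fun i hi => ContinuousAt.eventually_lt ?_
      continuousAt_const (by simpa [hx'pq] using hd i (mem_range.1 hi))
    exact ((φ.continuous continuous_const (hx' i)).dist (hx' (i + 1))).continuousAt
  filter_upwards [hsteps] with z hz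
  exact ⟨hN, if_pos rfl, by simp [hN.ne'], ht, fun i hi => hz i (mem_range.2 hi)⟩

end Chains

section Cocycles

variable {X : Type*} [MetricSpace X] {W : Type*} [NormedAddCommGroup W] {φ : Flow ℝ X}
  {a : ℝ → X → W} {ε T : ℝ}

theorem IsAddCocycle.apply_zero (ha : IsAddCocycle φ a) (x : X) : a 0 x = 0 := by
  simpa using ha.2 0 0 x

theorem IsAddCocycle.apply_natCast_mul (ha : IsAddCocycle φ a) (τ : ℝ) (x : X) (k : ℕ) :
    a (k * τ) x = ∑ j ∈ range k, a τ (φ (j * τ) x) := by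
  induction k with
  | zero => simpa using ha.apply_zero x
  | succ k ih =>
    rw [sum_range_succ, ← ih, Nat.cast_succ, add_one_mul, add_comm _ τ, ha.2, add_comm]

theorem IsAddCocycle.exists_norm_le_mul [CompactSpace X] (ha : IsAddCocycle φ a) :
    ∃ K, 0 ≤ K ∧ ∀ x t, 1 ≤ t → ‖a t x‖ ≤ K * t := by
  obtain ⟨C, hC⟩ := (isCompact_Icc.prod isCompact_univ).exists_bound_of_continuousOn
    (s := Set.Icc (0 : ℝ) 1 ×ˢ (Set.univ : Set X)) ha.1.continuousOn
  have hC' : ∀ x, ∀ s ∈ Set.Icc (0 : ℝ) 1, ‖a s x‖ ≤ C := fun x s hs => hC (s, x) ⟨hs, trivial⟩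
  have hgrowth : ∀ n : ℕ, ∀ x, ∀ s ∈ Set.Icc (0 : ℝ) 1, ‖a (n + s) x‖ ≤ (n + 1) * C := by
    intro n
    induction n with
    | zero => simpa using hC'
    | succ n ih =>
      intro x s hs
      rw [show ((n + 1 : ℕ) : ℝ) + s = n + s + 1 by push_cast; ring, ha.2]
      calc _ ≤ ‖a (n + s) (φ 1 x)‖ + ‖a 1 x‖ := norm_add_le _ _
        _ ≤ (n + 1) * C + C := add_le_add (ih _ s hs) (hC' x 1 ⟨zero_le_one, le_rfl⟩)
        _ = _ := by push_cast; ring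
  refine ⟨2 * max C 0, by positivity, fun x t ht => ?_⟩
  have hfloor : (⌊t⌋₊ : ℝ) ≤ t := Nat.floor_le (by linarith)
  have hfloor' : t < ⌊t⌋₊ + 1 := Nat.lt_floor_add_one t
  have hfloor1 : (1 : ℝ) ≤ ⌊t⌋₊ := by exact_mod_cast Nat.le_floor (by simpa using ht)
  calc ‖a t x‖ = ‖a (⌊t⌋₊ + (t - ⌊t⌋₊)) x‖ := by rw [add_sub_cancel]
    _ ≤ (⌊t⌋₊ + 1) * C := hgrowth _ x _ ⟨by linarith, by linarith⟩
    _ ≤ (⌊t⌋₊ + 1) * max C 0 := by gcongr; exact le_max_left _ _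
    _ ≤ 2 * max C 0 * t := by nlinarith [le_max_right C 0]

/-- The step is cut into `⌊t₀ / S⌋` pieces of equal length. -/
theorem IsAddCocycle.exists_isFlowChain_subdivide (ha : IsAddCocycle φ a) {S t₀ : ℝ} {p q : X}
    (hS : 0 < S) (ht₀ : S ≤ t₀) (hd : dist (φ t₀ p) q < ε) :
    ∃ k x τ, IsFlowChain φ ε S k x (fun _ => τ) p q ∧ τ ≤ 2 * S ∧
      (∀ i < k, ∃ s ∈ Set.Icc 0 t₀, x i = φ s p) ∧ k * τ = t₀ ∧
      ∑ i ∈ range k, a τ (x i) = a t₀ p := by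
  set k := ⌊t₀ / S⌋₊
  have hk1 : 1 ≤ k := Nat.le_floor (by rw [Nat.cast_one, le_div_iff₀ hS]; linarith)
  have hk : (0 : ℝ) < k := by exact_mod_cast hk1
  have hk1' : (1 : ℝ) ≤ k := by exact_mod_cast hk1
  have hkle : (k : ℝ) ≤ t₀ / S := Nat.floor_le (div_nonneg (by linarith) hS.le)
  have hklt : t₀ / S < k + 1 := Nat.lt_floor_add_one _
  rw [le_div_iff₀ hS] at hkle
  rw [div_lt_iff₀ hS] at hklt
  set τ := t₀ / k
  have hkτ : k * τ = t₀ := mul_div_cancel₀ _ hk.ne'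
  have hτ : S ≤ τ := by rw [le_div_iff₀ hk]; linarith
  have hx : ∀ i : ℕ, φ τ (φ (i * τ) p) = φ ((i + 1 : ℕ) * τ) p := fun i => by
    rw [← φ.map_add]; push_cast; ring_nf
  refine ⟨k, fun i => if i < k then φ (i * τ) p else q, τ,
    ⟨by omega, by simp [show k ≠ 0 by omega], by simp, fun _ _ => hτ, fun i hi => ?_⟩, ?_,
    fun i hi => ⟨i * τ, ⟨mul_nonneg i.cast_nonneg (by linarith), ?_⟩, if_pos hi⟩, hkτ, ?_⟩
  · simp only [if_pos hi, hx i]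
    split_ifs with h
    · simpa using lt_of_le_of_lt dist_nonneg hd
    · rwa [show i + 1 = k by omega, hkτ]
  · rw [div_le_iff₀ hk]; nlinarith
  · rw [← hkτ]; exact mul_le_mul_of_nonneg_right (by exact_mod_cast hi.le) (by linarith)
  · rw [← hkτ, ha.apply_natCast_mul]
    exact sum_congr rfl fun i hi => by simp only [if_pos (mem_range.1 hi)]

theorem IsFlowChain.exists_refine (ha : IsAddCocycle φ a) {S : ℝ} (hS : 0 < S) (hST : S ≤ T)
    {N : ℕ} {x : ℕ → X} {t : ℕ → ℝ} {p q : X} (h : IsFlowChain φ ε T N x t p q) :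
    ∃ N' x' t', IsFlowChain φ ε S N' x' t' p q ∧
      (∀ i < N', t' i ≤ 2 * S ∧ ∃ j < N, ∃ s ∈ Set.Icc 0 (t j), x' i = φ s (x j)) ∧
      ∑ i ∈ range N', t' i = ∑ i ∈ range N, t i ∧
      ∑ i ∈ range N', a (t' i) (x' i) = ∑ i ∈ range N, a (t i) (x i) := by
  have hsub : ∀ j, ∃ k y τ, j < N → IsFlowChain φ ε S k y (fun _ => τ) (x j) (x (j + 1)) ∧
      τ ≤ 2 * S ∧ (∀ i < k, ∃ s ∈ Set.Icc 0 (t j), y i = φ s (x j)) ∧ k * τ = t j ∧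
      ∑ i ∈ range k, a τ (y i) = a (t j) (x j) := by
    intro j
    by_cases hj : j < N
    · obtain ⟨k, y, τ, hy⟩ :=
        ha.exists_isFlowChain_subdivide hS (hST.trans (h.2.2.2.1 j hj)) (h.2.2.2.2 j hj)
      exact ⟨k, y, τ, fun _ => hy⟩
    · exact ⟨0, x, 0, fun hj' => absurd hj' hj⟩
  choose k y τ hy using hsub
  obtain ⟨N', x', t', hchain, hsteps, htime, hsum⟩ :=
    exists_isFlowChain_concat a h.1 (z := x) fun j hj => (hy j hj).1
  rw [h.2.1, h.2.2.1] at hchain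
  refine ⟨N', x', t', hchain, fun i hi => ?_, ?_, ?_⟩
  · obtain ⟨j, hj, m, hm, ht', hx'⟩ := hsteps i hi
    obtain ⟨s, hs, hys⟩ := (hy j hj).2.2.1 m hm
    exact ⟨ht' ▸ (hy j hj).2.1, j, hj, s, hs, hx'.trans hys⟩
  · rw [htime]
    exact sum_congr rfl fun j hj => by
      rw [sum_const, card_range, nsmul_eq_mul, (hy j (mem_range.1 hj)).2.2.2.1]
  · rw [hsum]
    exact sum_congr rfl fun j hj => (hy j (mem_range.1 hj)).2.2.2.2

theorem exists_isFlowChain_step_append {M : Set X} {K C : ℝ} (hK0 : 0 ≤ K)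
    (hK : ∀ x t, 1 ≤ t → ‖a t x‖ ≤ K * t) (hε : 0 < ε) (hT : 1 ≤ T)
    (hC : ∀ p ∈ M, ∀ q ∈ M, ∃ N x t, IsFlowChain φ ε T N x t p q ∧ ∑ i ∈ range N, t i ≤ C)
    {u v : X} {t₀ : ℝ} (ht₀ : T ≤ t₀) (hu : φ t₀ u ∈ M) (hv : v ∈ M) :
    ∃ N x t, IsFlowChain φ ε T N x t u v ∧ t₀ ≤ ∑ i ∈ range N, t i ∧
      ∑ i ∈ range N, t i ≤ t₀ + C ∧ ‖∑ i ∈ range N, a (t i) (x i) - a t₀ u‖ ≤ K * C := by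
  obtain ⟨N, x, t, hc, hCle⟩ := hC _ hu v hv
  have ht : ∀ i < N, 1 ≤ t i := fun i hi => hT.trans (hc.2.2.2.1 i hi)
  have htime := sum_range_seqAppend (fun t (_ : X) => t) 1 N (fun _ => t₀) t
    (fun i => if i = 0 then u else φ t₀ u) x
  have hsum := sum_range_seqAppend a 1 N (fun _ => t₀) t (fun i => if i = 0 then u else φ t₀ u) x
  simp only [sum_range_one, if_pos] at htime hsum
  refine ⟨_, _, _, (isFlowChain_one ht₀ (by simpa using hε)).append hc, ?_, ?_, ?_⟩
  · rw [htime, le_add_iff_nonneg_right]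
    exact sum_nonneg fun i hi => zero_le_one.trans (ht i (mem_range.1 hi))
  · rw [htime]
    linarith
  · rw [hsum, add_sub_cancel_left]
    exact (norm_sum_le_mul_sum_of_norm_le hK ht).trans (mul_le_mul_of_nonneg_left hCle hK0)

end Cocycles

section ChainRelation

variable {X : Type*} [MetricSpace X] {φ : Flow ℝ X} {ε T : ℝ}

def IsChainStep (φ : Flow ℝ X) (ε T : ℝ) (p q : X) : Prop :=
  ∃ t, T ≤ t ∧ dist (φ t p) q < ε

def HasChain (φ : Flow ℝ X) (ε T : ℝ) : X → X → Prop :=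
  TransGen (IsChainStep φ ε T)

theorem IsChainStep.mono {ε' T' : ℝ} {p q : X} (h : IsChainStep φ ε T p q) (hε : ε ≤ ε')
    (hT : T' ≤ T) : IsChainStep φ ε' T' p q :=
  let ⟨t, ht, hd⟩ := h
  ⟨t, hT.trans ht, hd.trans_le hε⟩

theorem HasChain.mono {ε' T' : ℝ} {p q : X} (h : HasChain φ ε T p q) (hε : ε ≤ ε')
    (hT : T' ≤ T) : HasChain φ ε' T' p q :=
  TransGen.mono (fun _ _ hs => hs.mono hε hT) _ _ h

theorem HasChain.trans {p q r : X} (h : HasChain φ ε T p q) (h' : HasChain φ ε T q r) :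
    HasChain φ ε T p r :=
  TransGen.trans h h'

theorem IsFlowChain.reflTransGen_to {N : ℕ} {x : ℕ → X} {t : ℕ → ℝ} {p q : X}
    (h : IsFlowChain φ ε T N x t p q) {i : ℕ} (hi : i ≤ N) :
    ReflTransGen (IsChainStep φ ε T) p (x i) := by
  induction i with
  | zero => rw [h.2.1]
  | succ i ih => exact (ih (by omega)).tail ⟨t i, h.2.2.2.1 i (by omega), h.2.2.2.2 i (by omega)⟩

theorem IsFlowChain.reflTransGen_from {N : ℕ} {x : ℕ → X} {t : ℕ → ℝ} {p q : X}
    (h : IsFlowChain φ ε T N x t p q) {i : ℕ} (hi : i ≤ N) :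
    ReflTransGen (IsChainStep φ ε T) (x i) q := by
  induction hi using Nat.decreasingInduction with
  | self => rw [h.2.2.1]
  | of_succ i hi ih => exact ih.head ⟨t i, h.2.2.2.1 i hi, h.2.2.2.2 i hi⟩

theorem hasChain_iff_exists_isFlowChain {p q : X} :
    HasChain φ ε T p q ↔ ∃ N x t, IsFlowChain φ ε T N x t p q := by
  refine ⟨fun h => ?_, fun ⟨N, x, t, h⟩ => ?_⟩
  · induction h using TransGen.trans_induction_on with
    | single h =>
      obtain ⟨t, ht, hd⟩ := h
      exact ⟨1, _, _, isFlowChain_one ht hd⟩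
    | trans _ _ ih ih' =>
      obtain ⟨N, x, t, h⟩ := ih
      obtain ⟨N', x', t', h'⟩ := ih'
      exact ⟨_, _, _, h.append h'⟩
  · obtain ⟨n, rfl⟩ := Nat.exists_eq_add_one.2 h.1
    rw [← h.2.2.1]
    exact TransGen.tail' (h.reflTransGen_to n.le_succ)
      ⟨t n, h.2.2.2.1 n n.lt_succ_self, h.2.2.2.2 n n.lt_succ_self⟩

theorem isChainTransitiveSet_iff {M : Set X} :
    IsChainTransitiveSet φ M ↔ ∀ p ∈ M, ∀ q ∈ M, ∀ ε > 0, ∀ T > 0, HasChain φ ε T p q := by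
  simp only [IsChainTransitiveSet, hasChain_iff_exists_isFlowChain]

theorem HasChain.delay {s : ℝ} {p q : X} (h : HasChain φ ε (T + s) p q) (hs : 0 ≤ s) :
    HasChain φ ε T (φ s p) q := by
  obtain ⟨u, ⟨t, ht, hd⟩, hrest⟩ := TransGen.head'_iff.1 h
  refine TransGen.head' ⟨t - s, by linarith, ?_⟩
    (ReflTransGen.mono (fun _ _ h' => h'.mono le_rfl (by linarith)) _ _ hrest)
  rwa [← φ.map_add, sub_add_cancel]

theorem exists_forall_hasChain_of_dist_flow_lt_right [CompactSpace X] (hε : 0 < ε) (T : ℝ) :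
    ∃ δ > 0, ∀ (p u v : X) (s : ℝ), 0 ≤ s → HasChain φ δ T p u → dist (φ s u) v < δ →
      HasChain φ ε T p v := by
  obtain ⟨δ, hδ, hφ⟩ := φ.cont'.exists_pos_forall_dist_lt (isCompact_Icc (a := 0) (b := T))
    (half_pos hε)
  refine ⟨min δ (ε / 2), lt_min hδ (half_pos hε), fun p u v s hs h hv => ?_⟩
  have hv' : dist (φ s u) v < ε / 2 := hv.trans_le (min_le_right _ _)
  rcases le_or_gt T s with hTs | hsT
  · exact TransGen.tail (h.mono ((min_le_right _ _).trans (half_le_self hε.le)) le_rfl)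
      ⟨s, hTs, hv'.trans (half_lt_self hε)⟩
  · -- too short to be a step of its own: lengthen the last step of the chain by `s` instead
    obtain ⟨w, hpw, t, ht, hd⟩ := TransGen.tail'_iff.1 h
    refine TransGen.tail' (ReflTransGen.mono (fun _ _ h' => h'.mono
      ((min_le_right _ _).trans (half_le_self hε.le)) le_rfl) _ _ hpw) ⟨t + s, by linarith, ?_⟩
    rw [add_comm, φ.map_add]
    calc dist (φ s (φ t w)) v ≤ dist (φ s (φ t w)) (φ s u) + dist (φ s u) v := dist_triangle ..
      _ < ε / 2 + ε / 2 :=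
        add_lt_add (hφ s ⟨hs, hsT.le⟩ _ _ (hd.trans_le (min_le_left _ _))) hv'
      _ = ε := add_halves ε

theorem exists_forall_hasChain_of_dist_flow_lt_left [CompactSpace X] (hε : 0 < ε) (hT : 0 ≤ T) :
    ∃ δ > 0, ∀ (u v q : X) (r : ℝ), 0 ≤ r → dist (φ r u) v < δ → HasChain φ δ (2 * T) v q →
      HasChain φ ε T u q := by
  obtain ⟨δ, hδ, hφ⟩ := φ.cont'.exists_pos_forall_dist_lt (isCompact_singleton (x := T)) hε
  refine ⟨min δ ε, lt_min hδ hε, fun u v q r hr hv h => ?_⟩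
  have h' : HasChain φ ε (T + T) v q := h.mono (min_le_right _ _) (two_mul T).ge
  rcases le_or_gt T r with hTr | hrT
  · exact TransGen.head ⟨r, hTr, hv.trans_le (min_le_right _ _)⟩ (h'.mono le_rfl (by linarith))
  · -- too short to be a step of its own: flow `T` longer and start the chain at `φ T v`
    refine TransGen.head ⟨r + T, by linarith, ?_⟩ (h'.delay hT)
    rw [add_comm, φ.map_add]
    exact hφ T rfl _ _ (hv.trans_le (min_le_left _ _))

end ChainRelation

namespace IsChainComponent

variable {X : Type*} [MetricSpace X] {φ : Flow ℝ X} {M : Set X}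

theorem mem_of_hasChain (hM : IsChainComponent φ M) {x z : X} (hx : x ∈ M)
    (hxz : ∀ ε > 0, ∀ T > 0, HasChain φ ε T x z) (hzx : ∀ ε > 0, ∀ T > 0, HasChain φ ε T z x) :
    z ∈ M := by
  have hM' := isChainTransitiveSet_iff.1 hM.1
  have htrans : IsChainTransitiveSet φ (insert z M) := by
    rw [isChainTransitiveSet_iff]
    rintro p (rfl | hp) q (rfl | hq) ε hε T hT
    · exact (hzx ε hε T hT).trans (hxz ε hε T hT)
    · exact (hzx ε hε T hT).trans (hM' x hx q hq ε hε T hT)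
    · exact (hM' p hp x hx ε hε T hT).trans (hxz ε hε T hT)
    · exact hM' p hp q hq ε hε T hT
  rw [hM.2 _ htrans (Set.subset_insert z M)]
  exact Set.mem_insert z M

variable [CompactSpace X]

theorem flow_mem (hM : IsChainComponent φ M) {x : X} (hx : x ∈ M) {s : ℝ} (hs : 0 ≤ s) :
    φ s x ∈ M := by
  have hM' := isChainTransitiveSet_iff.1 hM.1
  refine hM.mem_of_hasChain hx (fun ε hε T hT => ?_) fun ε hε T hT => ?_
  · obtain ⟨δ, hδ, hright⟩ := exists_forall_hasChain_of_dist_flow_lt_right (φ := φ) hε T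
    exact hright x x _ s hs (hM' x hx x hx δ hδ T hT) (by simpa using hδ)
  · exact (hM' x hx x hx ε hε (T + s) (by linarith)).delay hs

theorem isClosed (hM : IsChainComponent φ M) : IsClosed M := by
  have hM' := isChainTransitiveSet_iff.1 hM.1
  refine closure_subset_iff_isClosed.1 fun z hz => ?_
  obtain ⟨x, hx, -⟩ := Metric.mem_closure_iff.1 hz 1 one_pos
  refine hM.mem_of_hasChain hx (fun ε hε T hT => ?_) fun ε hε T hT => ?_
  · obtain ⟨δ, hδ, hright⟩ := exists_forall_hasChain_of_dist_flow_lt_right (φ := φ) hε T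
    obtain ⟨u, hu, hzu⟩ := Metric.mem_closure_iff.1 hz δ hδ
    exact hright x u z 0 le_rfl (hM' x hx u hu δ hδ T hT) (by rwa [φ.map_zero_apply, dist_comm])
  · obtain ⟨δ, hδ, hleft⟩ := exists_forall_hasChain_of_dist_flow_lt_left (φ := φ) hε hT.le
    obtain ⟨v, hv, hzv⟩ := Metric.mem_closure_iff.1 hz δ hδ
    exact hleft z v x 0 le_rfl (by rwa [φ.map_zero_apply])
      (hM' v hv x hx δ hδ (2 * T) (by positivity))

theorem mem_of_forall_exists_dist_flow_lt (hM : IsChainComponent φ M) {z : X}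
    (hz : ∀ δ > 0, ∀ T > 0, ∃ N x t p q, p ∈ M ∧ q ∈ M ∧ IsFlowChain φ δ T N x t p q ∧
      ∃ i < N, ∃ s ∈ Set.Icc 0 (t i), dist (φ s (x i)) z < δ) :
    z ∈ M := by
  have hM' := isChainTransitiveSet_iff.1 hM.1
  obtain ⟨-, -, -, x₀, -, hx₀, -⟩ := hz 1 one_pos 1 one_pos
  refine hM.mem_of_hasChain hx₀ (fun ε hε T hT => ?_) fun ε hε T hT => ?_
  · obtain ⟨δ, hδ, hright⟩ := exists_forall_hasChain_of_dist_flow_lt_right (φ := φ) hε T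
    obtain ⟨N, x, t, p, q, hp, -, hc, i, hi, s, hs, hsz⟩ := hz δ hδ T hT
    exact hright x₀ (x i) z s hs.1
      ((hM' x₀ hx₀ p hp δ hδ T hT).trans_left (hc.reflTransGen_to hi.le)) hsz
  · obtain ⟨δ₁, hδ₁, hleft₁⟩ := exists_forall_hasChain_of_dist_flow_lt_left (φ := φ) hε hT.le
    obtain ⟨δ₂, hδ₂, hleft₂⟩ :=
      exists_forall_hasChain_of_dist_flow_lt_left (φ := φ) hδ₁ (T := 2 * T) (by positivity)
    obtain ⟨N, x, t, p, q, -, hq, hc, i, hi, s, hs, hsz⟩ :=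
      hz (min δ₁ δ₂) (lt_min hδ₁ hδ₂) (2 * (2 * T)) (by positivity)
    have hc₂ := hc.mono (min_le_right _ _) le_rfl
    have hjump : dist (φ (t i - s) (φ s (x i))) (x (i + 1)) < δ₂ := by
      rw [← φ.map_add, sub_add_cancel]
      exact hc₂.2.2.2.2 i hi
    have hfrom := hleft₂ _ _ x₀ (t i - s) (by linarith [hs.2]) hjump
      (TransGen.trans_right (hc₂.reflTransGen_from (by omega : i + 1 ≤ N))
        (hM' q hq x₀ hx₀ δ₂ hδ₂ _ (by positivity)))
    exact hleft₁ z _ x₀ 0 le_rfl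
      (by rw [φ.map_zero_apply, dist_comm]; exact hsz.trans_le (min_le_left _ _)) hfrom

theorem exists_forall_flow_mem (hM : IsChainComponent φ M) {U : Set X} (hU : IsOpen U)
    (hMU : M ⊆ U) :
    ∃ ε > 0, ∃ T > 0, ∀ N x t p q, p ∈ M → q ∈ M → IsFlowChain φ ε T N x t p q →
      ∀ i < N, ∀ s ∈ Set.Icc 0 (t i), φ s (x i) ∈ U := by
  by_contra! hbad
  set B : ℕ → Set X := fun n => {z | z ∉ U ∧ ∃ N x t p q, p ∈ M ∧ q ∈ M ∧
    IsFlowChain φ (1 / (n + 1)) (n + 1) N x t p q ∧ ∃ i < N, ∃ s ∈ Set.Icc 0 (t i), φ s (x i) = z}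
  have hB : ∀ n, (B n).Nonempty := fun n => by
    obtain ⟨N, x, t, p, q, hp, hq, hc, i, hi, s, hs, hout⟩ :=
      hbad (1 / (n + 1)) (by positivity) (n + 1) (by positivity)
    exact ⟨_, hout, N, x, t, p, q, hp, hq, hc, i, hi, s, hs, rfl⟩
  have hBanti : ∀ n, B (n + 1) ⊆ B n := by
    rintro n z ⟨hzU, N, x, t, p, q, hp, hq, hc, hpt⟩
    refine ⟨hzU, N, x, t, p, q, hp, hq, hc.mono ?_ (by push_cast; linarith), hpt⟩
    exact one_div_le_one_div_of_le (by positivity) (by push_cast; linarith)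
  obtain ⟨z, hz⟩ := IsCompact.nonempty_iInter_of_sequence_nonempty_isCompact_isClosed
    (fun n => closure (B n)) (fun n => closure_mono (hBanti n)) (fun n => (hB n).closure)
    isClosed_closure.isCompact fun _ => isClosed_closure
  have hz' : ∀ n, z ∈ closure (B n) := Set.mem_iInter.1 hz
  have hzU : z ∉ U := closure_minimal (fun y hy => hy.1) hU.isClosed_compl (hz' 0)
  refine hzU (hMU (hM.mem_of_forall_exists_dist_flow_lt fun δ hδ T _ => ?_))
  obtain ⟨n, hnδ, hnT⟩ := exists_nat_one_div_le_and_le hδ T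
  obtain ⟨-, ⟨-, N, x, t, p, q, hp, hq, hc, i, hi, s, hs, rfl⟩, hyz⟩ :=
    Metric.mem_closure_iff.1 (hz' n) δ hδ
  exact ⟨N, x, t, p, q, hp, hq, hc.mono hnδ hnT, i, hi, s, hs, by rwa [dist_comm]⟩

theorem exists_isFlowChain_sum_le (hM : IsChainComponent φ M) {ε T : ℝ} (hε : 0 < ε)
    (hT : 0 < T) :
    ∃ C, 0 ≤ C ∧
      ∀ p ∈ M, ∀ q ∈ M, ∃ N x t, IsFlowChain φ ε T N x t p q ∧ ∑ i ∈ range N, t i ≤ C := by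
  set O : ℕ → Set (X × X) := fun n =>
    {z | ∃ N x t, IsFlowChain φ ε T N x t z.1 z.2 ∧ ∑ i ∈ range N, t i < n}
  have hO : ∀ n, IsOpen (O n) := fun n => isOpen_iff_mem_nhds.2 fun _ ⟨N, _, t, hc, hlt⟩ =>
    hc.eventually_isFlowChain_update.mono fun _ hz => ⟨N, _, t, hz, hlt⟩
  have hOmono : Monotone O := fun m n hmn _ ⟨N, x, t, hc, hlt⟩ =>
    ⟨N, x, t, hc, hlt.trans_le (by exact_mod_cast hmn)⟩
  have hcover : M ×ˢ M ⊆ ⋃ n, O n := fun z ⟨hp, hq⟩ => by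
    obtain ⟨N, x, t, hc⟩ := hM.1 z.1 hp z.2 hq ε hε T hT
    obtain ⟨n, hn⟩ := exists_nat_gt (∑ i ∈ range N, t i)
    exact Set.mem_iUnion.2 ⟨n, N, x, t, hc, hn⟩
  obtain ⟨n, hn⟩ := (hM.isClosed.isCompact.prod hM.isClosed.isCompact).elim_directed_cover O hO
    hcover hOmono.directed_le
  refine ⟨n, n.cast_nonneg, fun p hp q hq => ?_⟩
  obtain ⟨N, x, t, hc, hlt⟩ := hn (Set.mk_mem_prod hp hq)
  exact ⟨N, x, t, hc, hlt.le⟩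

end IsChainComponent

section MorseSpectrum

variable {X : Type*} [MetricSpace X] {W : Type*} [NormedAddCommGroup W] [NormedSpace ℝ W]
  {φ : Flow ℝ X} {a : ℝ → X → W} {M : Set X} {ε T : ℝ}

def chainExpSet (φ : Flow ℝ X) (a : ℝ → X → W) (M : Set X) (ε T : ℝ) : Set W :=
  {v | ∃ N x t, ∃ p ∈ M, ∃ q ∈ M, IsFlowChain φ ε T N x t p q ∧ v = chainExp a N x t}

theorem mem_morseSpec_iff {v : W} :
    v ∈ morseSpec φ a M ↔ ∀ ε > 0, ∀ T > 0, v ∈ closure (chainExpSet φ a M ε T) := by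
  simp only [morseSpec, chainExpSet, Set.mem_iInter]

theorem chainExpSet_mono {ε' T' : ℝ} (hε : ε ≤ ε') (hT : T' ≤ T) :
    chainExpSet φ a M ε T ⊆ chainExpSet φ a M ε' T' := by
  rintro _ ⟨N, x, t, p, hp, q, hq, hc, rfl⟩
  exact ⟨N, x, t, p, hp, q, hq, hc.mono hε hT, rfl⟩

theorem chainExpSet_subset_closedBall {K : ℝ} (hK : ∀ x t, 1 ≤ t → ‖a t x‖ ≤ K * t)
    (hT : 1 ≤ T) : chainExpSet φ a M ε T ⊆ Metric.closedBall 0 K := by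
  rintro _ ⟨N, x, t, p, hp, q, hq, hc, rfl⟩
  have ht : ∀ i < N, 1 ≤ t i := fun i hi => hT.trans (hc.2.2.2.1 i hi)
  have hΘ : 0 < ∑ i ∈ range N, t i :=
    sum_pos (fun i hi => one_pos.trans_le (ht i (mem_range.1 hi))) (nonempty_range_iff.2 hc.1.ne')
  rw [mem_closedBall_zero_iff, chainExp, norm_smul, Real.norm_of_nonneg (inv_nonneg.2 hΘ.le),
    inv_mul_le_iff₀ hΘ, mul_comm]
  exact norm_sum_le_mul_sum_of_norm_le hK ht

variable {Y : Type*} [MetricSpace Y] {W' : Type*} [NormedAddCommGroup W'] [NormedSpace ℝ W']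
  {φ' : Flow ℝ Y} {b : ℝ → Y → W'} {π : X → Y} {L : W →L[ℝ] W'}

theorem image_chainExpSet_subset (hequi : ∀ t x, π (φ t x) = φ' t (π x))
    (hrel : ∀ t x, b t (π x) = L (a t x)) {δ ε' : ℝ}
    (hπ : ∀ u v, dist u v < δ → dist (π u) (π v) < ε') :
    L '' chainExpSet φ a M δ T ⊆ chainExpSet φ' b (π '' M) ε' T := by
  rintro _ ⟨_, ⟨N, x, t, p, hp, q, hq, ⟨hN, hx0, hxN, ht, hd⟩, rfl⟩, rfl⟩
  refine ⟨N, π ∘ x, t, π p, Set.mem_image_of_mem π hp, π q, Set.mem_image_of_mem π hq,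
    ⟨hN, by simp [hx0], by simp [hxN], ht, fun i hi => ?_⟩, ?_⟩
  · simpa [← hequi] using hπ _ _ (hd i hi)
  · simp [chainExp, hrel]

theorem image_morseSpec_subset [CompactSpace X] (hπ : Continuous π)
    (hequi : ∀ t x, π (φ t x) = φ' t (π x)) (hrel : ∀ t x, b t (π x) = L (a t x)) :
    L '' morseSpec φ a M ⊆ morseSpec φ' b (π '' M) := by
  rintro _ ⟨v, hv, rfl⟩
  refine mem_morseSpec_iff.2 fun ε hε T hT => ?_
  obtain ⟨δ, hδ, hπδ⟩ :=
    Metric.uniformContinuous_iff.1 (CompactSpace.uniformContinuous_of_continuous hπ) ε hε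
  exact closure_mono (image_chainExpSet_subset hequi hrel hπδ)
    (image_closure_subset_closure_image L.continuous
      (Set.mem_image_of_mem L (mem_morseSpec_iff.1 hv δ hδ T hT)))

end MorseSpectrum

section Lifting

variable {X : Type*} [MetricSpace X] {W : Type*} [NormedAddCommGroup W] [NormedSpace ℝ W]
  {φ : Flow ℝ X} {a : ℝ → X → W} {M : Set X} {ε T : ℝ}
  {Y : Type*} [MetricSpace Y] {W' : Type*} [NormedAddCommGroup W'] [NormedSpace ℝ W']
  {φ' : Flow ℝ Y} {b : ℝ → Y → W'} {π : X → Y} {L : W →L[ℝ] W'}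

/-- Each step of the given chain is shadowed by following the orbit of a lift of its initial
point, and then returning to the lift of the next point by a chain of total time at most `C`. -/
theorem exists_isFlowChain_lift [CompactSpace X] (hM : IsChainComponent φ M)
    (hrel : ∀ t x, b t (π x) = L (a t x)) {S C K η : ℝ} (hε : 0 < ε) (hT : 1 ≤ T) (hTS : T ≤ S)
    (hK0 : 0 ≤ K) (hK : ∀ x t, 1 ≤ t → ‖a t x‖ ≤ K * t)
    (hC : ∀ p ∈ M, ∀ q ∈ M, ∃ N x t, IsFlowChain φ ε T N x t p q ∧ ∑ i ∈ range N, t i ≤ C)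
    (hη : ∀ s ∈ Set.Icc S (2 * S), ∀ u v, dist u v < η → dist (b s u) (b s v) < 1)
    {N : ℕ} (hN : 0 < N) {x : ℕ → Y} {t : ℕ → ℝ} (ht : ∀ j < N, t j ∈ Set.Icc S (2 * S))
    (hx : ∀ j ≤ N, x j ∈ Metric.thickening η (π '' M)) :
    ∃ N' x' t', ∃ p ∈ M, ∃ q ∈ M, IsFlowChain φ ε T N' x' t' p q ∧
      ∑ j ∈ range N, t j ≤ ∑ i ∈ range N', t' i ∧
      ∑ i ∈ range N', t' i ≤ ∑ j ∈ range N, t j + N * C ∧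
      ‖L (∑ i ∈ range N', a (t' i) (x' i)) - ∑ j ∈ range N, b (t j) (x j)‖ ≤
        N * (1 + ‖L‖ * (K * C)) := by
  have hlift : ∀ j, ∃ y ∈ M, j ≤ N → dist (π y) (x j) < η := fun j => by
    obtain ⟨_, ⟨y, hy, rfl⟩, hyx⟩ := Metric.mem_thickening_iff.1 (hx _ (min_le_right j N))
    exact ⟨y, hy, fun hj => by rwa [min_eq_left hj, dist_comm] at hyx⟩
  choose y hyM hyx using hlift
  have hblock : ∀ j, ∃ n z s, j < N → IsFlowChain φ ε T n z s (y j) (y (j + 1)) ∧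
      t j ≤ ∑ i ∈ range n, s i ∧ ∑ i ∈ range n, s i ≤ t j + C ∧
      ‖∑ i ∈ range n, a (s i) (z i) - a (t j) (y j)‖ ≤ K * C := fun j => by
    by_cases hj : j < N
    · obtain ⟨n, z, s, h⟩ := exists_isFlowChain_step_append hK0 hK hε hT hC
        (hTS.trans (ht j hj).1) (hM.flow_mem (hyM j) (by linarith [(ht j hj).1])) (hyM (j + 1))
      exact ⟨n, z, s, fun _ => h⟩
    · exact ⟨0, y, 0, fun hj' => absurd hj' hj⟩
  choose n z s hzs using hblock
  obtain ⟨N', x', t', hc, -, htime, hsum⟩ :=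
    exists_isFlowChain_concat a hN (z := y) fun j hj => (hzs j hj).1
  refine ⟨N', x', t', y 0, hyM 0, y N, hyM N, hc, ?_, ?_, ?_⟩
  · rw [htime]
    exact sum_le_sum fun j hj => (hzs j (mem_range.1 hj)).2.1
  · calc _ = ∑ j ∈ range N, ∑ k ∈ range (n j), s j k := htime
      _ ≤ ∑ j ∈ range N, (t j + C) := sum_le_sum fun j hj => (hzs j (mem_range.1 hj)).2.2.1
      _ = _ := by rw [sum_add_distrib, sum_const, card_range, nsmul_eq_mul]
  · have hstep : ∀ j < N, ‖L (∑ k ∈ range (n j), a (s j k) (z j k)) - b (t j) (x j)‖ ≤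
        1 + ‖L‖ * (K * C) := fun j hj => by
      rw [show L (∑ k ∈ range (n j), a (s j k) (z j k)) - b (t j) (x j) =
          (b (t j) (π (y j)) - b (t j) (x j)) +
            L (∑ k ∈ range (n j), a (s j k) (z j k) - a (t j) (y j)) by
        rw [hrel, map_sub]; abel]
      refine norm_add_le_of_le ?_ (L.le_opNorm_of_le (hzs j hj).2.2.2)
      rw [← dist_eq_norm]
      exact (hη _ (ht j hj) _ _ (hyx j hj.le)).le
    rw [hsum, map_sum, ← sum_sub_distrib]
    refine (norm_sum_le _ _).trans ((sum_le_sum fun j hj => hstep j (mem_range.1 hj)).trans_eq ?_)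
    rw [sum_const, card_range, nsmul_eq_mul]

theorem exists_forall_dist_chainExp_le [CompactSpace X] [CompactSpace Y]
    (ha : IsAddCocycle φ a) (hb : IsAddCocycle φ' b) (hrel : ∀ t x, b t (π x) = L (a t x))
    (hM : IsChainComponent φ M) (hM' : IsChainComponent φ' (π '' M)) (hε : 0 < ε) (hT : 0 < T)
    {ρ : ℝ} (hρ : 0 < ρ) :
    ∃ ε₀ > 0, ∃ S₀ > 0, ∀ w ∈ chainExpSet φ' b (π '' M) ε₀ S₀,
      ∃ v ∈ chainExpSet φ a M ε T, dist (L v) w ≤ ρ := by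
  obtain ⟨Ka, hKa0, hKa⟩ := ha.exists_norm_le_mul
  obtain ⟨Kb, hKb0, hKb⟩ := hb.exists_norm_le_mul
  obtain ⟨C, hC0, hC⟩ := hM.exists_isFlowChain_sum_le hε (T := max T 1) (by positivity)
  set R := 1 + ‖L‖ * (Ka * C) + Kb * C
  set S := max (max T 1) (R / ρ)
  have hS1 : 1 ≤ S := (le_max_right T 1).trans (le_max_left _ _)
  obtain ⟨η, hη, hηb⟩ :=
    hb.1.exists_pos_forall_dist_lt (isCompact_Icc (a := S) (b := 2 * S)) one_pos
  obtain ⟨ε₀, hε₀, T₀, hT₀, hconf⟩ :=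
    hM'.exists_forall_flow_mem Metric.isOpen_thickening (Metric.self_subset_thickening hη _)
  refine ⟨ε₀, hε₀, max S T₀, by positivity, ?_⟩
  rintro _ ⟨N, x, t, p', hp', q', hq', hc, rfl⟩
  obtain ⟨N', x', t', hc', hsteps, htime, hsum⟩ :=
    hc.exists_refine hb (S := S) (by positivity) (le_max_left _ _)
  have hx' : ∀ j ≤ N', x' j ∈ Metric.thickening η (π '' M) := fun j hj => by
    rcases hj.lt_or_eq with hj | rfl
    · obtain ⟨-, i, hi, s, hs, hx'j⟩ := hsteps j hj
      exact hx'j ▸ hconf N x t p' q' hp' hq' (hc.mono le_rfl (le_max_right _ _)) i hi s hs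
    · exact hc'.2.2.1 ▸ Metric.self_subset_thickening hη _ hq'
  obtain ⟨N'', y, s, p, hp, q, hq, hlift, hD, hD', hdiff⟩ :=
    exists_isFlowChain_lift hM hrel hε (le_max_right T 1) (le_max_left _ _) hKa0 hKa hC hηb
      hc'.1 (fun j hj => ⟨hc'.2.2.2.1 j hj, (hsteps j hj).1⟩) hx'
  refine ⟨chainExp a N'' y s,
    ⟨N'', y, s, p, hp, q, hq, hlift.mono le_rfl (le_max_left _ _), rfl⟩, ?_⟩
  have hΘ : N' * S ≤ ∑ i ∈ range N', t' i := by
    calc (N' : ℝ) * S = ∑ _i ∈ range N', S := by rw [sum_const, card_range, nsmul_eq_mul]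
      _ ≤ _ := sum_le_sum fun i hi => hc'.2.2.2.1 i (mem_range.1 hi)
  have hB := norm_sum_le_mul_sum_of_norm_le hKb (x := x') fun i hi => hS1.trans (hc'.2.2.2.1 i hi)
  rw [dist_eq_norm, chainExp, chainExp, ← htime, ← hsum, map_smul]
  calc _ ≤ R / S := norm_inv_smul_sub_inv_smul_le (by exact_mod_cast hc'.1) (by positivity)
        hΘ hD hD' hdiff hB hKb0
    _ ≤ ρ := by
        rw [div_le_iff₀ (by positivity)]
        have := (div_le_iff₀ hρ).1 (le_max_right (max T 1) (R / ρ))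
        linarith

theorem morseSpec_subset_image [CompactSpace X] [CompactSpace Y] [FiniteDimensional ℝ W]
    (ha : IsAddCocycle φ a) (hb : IsAddCocycle φ' b) (hrel : ∀ t x, b t (π x) = L (a t x))
    (hM : IsChainComponent φ M) (hM' : IsChainComponent φ' (π '' M)) :
    morseSpec φ' b (π '' M) ⊆ L '' morseSpec φ a M := by
  intro w hw
  obtain ⟨K, -, hK⟩ := ha.exists_norm_le_mul
  set S : ℕ → Set W := fun n => chainExpSet φ a M (1 / (n + 1)) (n + 1)
  have hS : Antitone S := antitone_nat_of_succ_le fun n => chainExpSet_mono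
    (one_div_le_one_div_of_le (by positivity) (by push_cast; linarith)) (by push_cast; linarith)
  have hw' : ∀ n, w ∈ closure (L '' S n) := fun n => Metric.mem_closure_iff.2 fun δ hδ => by
    obtain ⟨ε₀, hε₀, S₀, hS₀, hlift⟩ := exists_forall_dist_chainExp_le ha hb hrel hM hM'
      (ε := 1 / (n + 1)) (T := n + 1) (by positivity) (by positivity) (half_pos hδ)
    obtain ⟨w', hw', hww'⟩ :=
      Metric.mem_closure_iff.1 (mem_morseSpec_iff.1 hw ε₀ hε₀ S₀ hS₀) (δ / 2) (half_pos hδ)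
    obtain ⟨v, hv, hvw'⟩ := hlift w' hw'
    refine ⟨L v, Set.mem_image_of_mem L hv, ?_⟩
    linarith [dist_triangle w w' (L v), dist_comm w' (L v)]
  obtain ⟨v, hv, rfl⟩ := exists_forall_mem_closure_of_mem_closure_image L.continuous
    (isCompact_closedBall 0 K) hS (chainExpSet_subset_closedBall hK (by norm_num)) hw'
  refine ⟨v, mem_morseSpec_iff.2 fun ε hε T hT => ?_, rfl⟩
  obtain ⟨n, hnε, hnT⟩ := exists_nat_one_div_le_and_le hε T
  exact closure_mono (chainExpSet_mono hnε hnT) (hv n)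

end Lifting

theorem morseSpec_image_general (φ : Flow ℝ E) (a : ℝ → E → V) (ha : IsAddCocycle φ a)
    {E' : Type*} [MetricSpace E'] [CompactSpace E']
    {V' : Type*} [NormedAddCommGroup V'] [NormedSpace ℝ V']
    (φ' : Flow ℝ E') (b : ℝ → E' → V') (hb : IsAddCocycle φ' b)
    (π : E → E') (hπ : Continuous π) (hequi : ∀ (t : ℝ) (x : E), π (φ t x) = φ' t (π x))
    (p : V →ₗ[ℝ] V') (hrel : ∀ (t : ℝ) (x : E), b t (π x) = p (a t x))
    (M : Set E) (hM : IsChainComponent φ M) (hM' : IsChainComponent φ' (π '' M)) :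
    morseSpec φ' b (π '' M) = p '' morseSpec φ a M := by
  have hp : ⇑(LinearMap.toContinuousLinearMap p) = p := LinearMap.coe_toContinuousLinearMap' p
  have hrel' : ∀ t x, b t (π x) = LinearMap.toContinuousLinearMap p (a t x) := by
    simpa only [hp] using hrel
  rw [← hp]
  exact (morseSpec_subset_image ha hb hrel' hM hM').antisymm
    (image_morseSpec_subset hπ hequi hrel')

/-- If `π : E → E'` intertwines the flows, `p : V →ₗ[ℝ] V'` intertwines the
cocycles (`b t (π x) = p (a t x)`), `M` is a chain component of `φ` and `π(M)`
is a chain component of `φ'`, then the Morse spectrum of `π(M)` for `b` is the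
image under `p` of the Morse spectrum of `M` for `a`. -/
theorem morseSpec_image (φ : Flow ℝ E) (a : ℝ → E → V) (ha : IsAddCocycle φ a)
    {E' : Type*} [MetricSpace E'] [CompactSpace E']
    {V' : Type*} [NormedAddCommGroup V'] [NormedSpace ℝ V'] [FiniteDimensional ℝ V']
    (φ' : Flow ℝ E') (b : ℝ → E' → V') (hb : IsAddCocycle φ' b)
    (π : E → E') (hπ : Continuous π) (hequi : ∀ (t : ℝ) (x : E), π (φ t x) = φ' t (π x))
    (p : V →ₗ[ℝ] V') (hrel : ∀ (t : ℝ) (x : E), b t (π x) = p (a t x))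
    (M : Set E) (hM : IsChainComponent φ M) (hM' : IsChainComponent φ' (π '' M)) :
    morseSpec φ' b (π '' M) = p '' morseSpec φ a M :=
  morseSpec_image_general φ a ha φ' b hb π hπ hequi p hrel M hM hM'

end
end

section
/- Let Π be a finite root system in the dual of a finite-dimensional real inner product space 𝔞, with simple system Σ, positive system Π⁺, open fundamental Weyl chamber 𝔞⁺ = {H ∈ 𝔞 : α(H) > 0 for all α ∈ Σ}, and Weyl group W. For Θ ⊆ Σ let ⟨Θ⟩ = Π ∩ span_ℝ(Θ) and let W_Θ ⊆ W be the subgroup generated by the reflections s_α with α ∈ Θ. Then {H ∈ 𝔞 : α(H) > 0 for all α ∈ Π⁺ \ ⟨Θ⟩} is exactly the topological interior of W_Θ · cl(𝔞⁺), and it is an open convex cone in 𝔞. -/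
open Filter Topology

section

variable {𝔞 : Type*} [NormedAddCommGroup 𝔞] [InnerProductSpace ℝ 𝔞] [FiniteDimensional ℝ 𝔞]

/-- The vector `u ∈ 𝔞` representing the functional `α` via the inner product:
`α x = ⟪u, x⟫` for all `x`. -/
noncomputable def rieszVec (α : 𝔞 →ₗ[ℝ] ℝ) : 𝔞 :=
  (InnerProductSpace.toDual ℝ 𝔞).symm (LinearMap.toContinuousLinearMap α)

/-- The orthogonal reflection of `𝔞` in the hyperplane `ker α`:
`x ↦ x - (2 α x / α u) • u`, where `u` is the Riesz vector of `α`. -/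
noncomputable def rootRefl (α : 𝔞 →ₗ[ℝ] ℝ) : Module.End ℝ 𝔞 :=
  LinearMap.id - (2 / α (rieszVec α)) • (α.smulRight (rieszVec α))

/-- `RS` bundles the data of a finite (possibly non-reduced) root system
`rts ⊆ 𝔞* \ {0}`, stable under the (duals of the) root reflections, together
with a positive system `pos` coming from a simple system `sim`. -/
structure IsRootSystemWithBase (rts pos : Set (𝔞 →ₗ[ℝ] ℝ)) (sim : Finset (𝔞 →ₗ[ℝ] ℝ)) : Prop where
  finite : rts.Finite
  ne_zero : (0 : 𝔞 →ₗ[ℝ] ℝ) ∉ rts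
  refl_mem : ∀ α ∈ rts, ∀ β ∈ rts, β ∘ₗ (rootRefl α : 𝔞 →ₗ[ℝ] 𝔞) ∈ rts
  sim_subset : ↑sim ⊆ pos
  pos_subset : pos ⊆ rts
  union : rts = pos ∪ (fun β => -β) '' pos
  disjoint : Disjoint pos ((fun β => -β) '' pos)
  pos_comb : ∀ β ∈ pos, ∃ c : (𝔞 →ₗ[ℝ] ℝ) → ℝ,
    (∀ α ∈ sim, 0 ≤ c α) ∧ β = ∑ α ∈ sim, c α • α
  indep : LinearIndependent ℝ (fun α : sim => (α : 𝔞 →ₗ[ℝ] ℝ))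

/-- The open fundamental Weyl chamber determined by the simple system `sim`. -/
def weylChamber (sim : Finset (𝔞 →ₗ[ℝ] ℝ)) : Set 𝔞 :=
  {H : 𝔞 | ∀ α ∈ sim, 0 < α H}

/-- `⟨Θ⟩ = Π ∩ span ℝ Θ`, the roots lying in the span of `Θ`. -/
def rootsSpannedBy (rts : Set (𝔞 →ₗ[ℝ] ℝ)) (Θ : Finset (𝔞 →ₗ[ℝ] ℝ)) : Set (𝔞 →ₗ[ℝ] ℝ) :=
  rts ∩ (Submodule.span ℝ (↑Θ : Set (𝔞 →ₗ[ℝ] ℝ)) : Set (𝔞 →ₗ[ℝ] ℝ))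

/-- The subgroup `W_Θ` of the Weyl group generated by the reflections `s_α`,
`α ∈ Θ` (as a submonoid of `End 𝔞`; since the reflections are involutions this
has the same elements as the generated group). -/
noncomputable def weylSubmonoid (Θ : Set (𝔞 →ₗ[ℝ] ℝ)) : Submonoid (Module.End ℝ 𝔞) :=
  Submonoid.closure (rootRefl '' Θ)

/-! Composition `β ↦ β ∘ₗ w` with `w ∈ W_Θ` permutes the positive roots outside `⟨Θ⟩`, since a
reflection `s_α`, `α ∈ Θ`, changes a root only by a multiple of `α`. Hence `W_Θ · cl(𝔞⁺)` lies in
the closed cone where these roots are `≥ 0`, whose interior is the open cone. Conversely,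
reflecting `H` in a root of `Θ` that is negative on it strictly decreases the number of positive
roots negative on `H`, so some `w ∈ W_Θ` makes `w H` nonnegative on `Θ`; if `H` is in the open cone,
so is `w H`, which therefore lies in `cl(𝔞⁺)`. -/

section PolyhedralCone

variable {E : Type*} [NormedAddCommGroup E] [NormedSpace ℝ E] [FiniteDimensional ℝ E]
  {R : Set (E →ₗ[ℝ] ℝ)}

lemma interior_setOf_nonneg {f : E →ₗ[ℝ] ℝ} (hf : f ≠ 0) :
    interior {x | 0 ≤ f x} = {x | 0 < f x} := by
  have hopen := LinearMap.isOpenMap_of_finiteDimensional f (LinearMap.surjective hf)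
  change interior (f ⁻¹' Set.Ici 0) = f ⁻¹' Set.Ioi 0
  rw [← hopen.preimage_interior_eq_interior_preimage f.continuous_of_finiteDimensional,
    interior_Ici]

lemma isOpen_setOf_forall_pos (hR : R.Finite) : IsOpen {x : E | ∀ f ∈ R, 0 < f x} := by
  simp only [Set.ofPred_forall]
  exact hR.isOpen_biInter fun f _ => isOpen_lt continuous_const f.continuous_of_finiteDimensional

omit [FiniteDimensional ℝ E] in
lemma convex_setOf_forall_pos (R : Set (E →ₗ[ℝ] ℝ)) : Convex ℝ {x : E | ∀ f ∈ R, 0 < f x} := by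
  simp only [Set.ofPred_forall]
  exact convex_iInter₂ fun f _ => convex_halfSpace_gt f.isLinear 0

lemma interior_setOf_forall_nonneg (hR : R.Finite) (hR₀ : ∀ f ∈ R, f ≠ 0) :
    interior {x : E | ∀ f ∈ R, 0 ≤ f x} = {x : E | ∀ f ∈ R, 0 < f x} := by
  simp only [Set.ofPred_forall, hR.interior_biInter]
  exact Set.iInter₂_congr fun f hf => interior_setOf_nonneg (hR₀ f hf)

lemma closure_setOf_forall_pos (hR : R.Finite) (hR₀ : ∀ f ∈ R, f ≠ 0)
    (hne : {x : E | ∀ f ∈ R, 0 < f x}.Nonempty) :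
    closure {x : E | ∀ f ∈ R, 0 < f x} = {x : E | ∀ f ∈ R, 0 ≤ f x} := by
  have hconv : Convex ℝ {x : E | ∀ f ∈ R, 0 ≤ f x} := by
    simp only [Set.ofPred_forall]
    exact convex_iInter₂ fun f _ => convex_halfSpace_ge f.isLinear 0
  have hclosed : IsClosed {x : E | ∀ f ∈ R, 0 ≤ f x} := by
    simp only [Set.ofPred_forall]
    exact isClosed_biInter fun f _ => isClosed_le continuous_const f.continuous_of_finiteDimensional
  rw [← interior_setOf_forall_nonneg hR hR₀] at hne ⊢
  rw [hconv.closure_interior_eq_closure_of_nonempty_interior hne, hclosed.closure_eq]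

end PolyhedralCone


lemma inner_rieszVec (α : 𝔞 →ₗ[ℝ] ℝ) (x : 𝔞) : inner ℝ (rieszVec α) x = α x := by
  simp [rieszVec, InnerProductSpace.toDual_symm_apply]

lemma apply_rieszVec_self_pos {α : 𝔞 →ₗ[ℝ] ℝ} (hα : α ≠ 0) : 0 < α (rieszVec α) := by
  have hu : rieszVec α ≠ 0 := by simpa [rieszVec] using hα
  rw [← inner_rieszVec, real_inner_self_eq_norm_sq]
  positivity

lemma rootRefl_apply (α : 𝔞 →ₗ[ℝ] ℝ) (x : 𝔞) :
    rootRefl α x = x - (2 * α x / α (rieszVec α)) • rieszVec α := by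
  simp only [rootRefl, LinearMap.sub_apply, LinearMap.smul_apply, LinearMap.smulRight_apply,
    LinearMap.id_apply, smul_smul]
  congr 2
  ring

lemma comp_rootRefl (α β : 𝔞 →ₗ[ℝ] ℝ) :
    β ∘ₗ rootRefl α = β - (2 * β (rieszVec α) / α (rieszVec α)) • α := by
  ext x
  simp only [LinearMap.coe_comp, Function.comp_apply, rootRefl_apply, map_sub, map_smul,
    smul_eq_mul, LinearMap.sub_apply, LinearMap.smul_apply, sub_right_inj]
  ring

lemma comp_rootRefl_self {α : 𝔞 →ₗ[ℝ] ℝ} (hα : α ≠ 0) : α ∘ₗ rootRefl α = -α := by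
  rw [comp_rootRefl, mul_div_assoc, div_self (apply_rieszVec_self_pos hα).ne', mul_one, two_smul]
  abel

lemma rootRefl_mul_self {α : 𝔞 →ₗ[ℝ] ℝ} (hα : α ≠ 0) : rootRefl α * rootRefl α = 1 := by
  ext x
  have hαx : α (rootRefl α x) = -α x := LinearMap.congr_fun (comp_rootRefl_self hα) x
  rw [Module.End.mul_apply, rootRefl_apply α (rootRefl α x), hαx, rootRefl_apply,
    Module.End.one_apply, mul_neg, neg_div, neg_smul, sub_neg_eq_add, sub_add_cancel]

lemma comp_rootRefl_comp_rootRefl {α : 𝔞 →ₗ[ℝ] ℝ} (hα : α ≠ 0) (β : 𝔞 →ₗ[ℝ] ℝ) :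
    (β ∘ₗ rootRefl α) ∘ₗ rootRefl α = β := by
  rw [LinearMap.comp_assoc, ← Module.End.mul_eq_comp, rootRefl_mul_self hα, Module.End.one_eq_id,
    LinearMap.comp_id]

lemma exists_mul_eq_one_of_mem_weylSubmonoid {Θ : Set (𝔞 →ₗ[ℝ] ℝ)} (hΘ : ∀ α ∈ Θ, α ≠ 0)
    {w : Module.End ℝ 𝔞} (hw : w ∈ weylSubmonoid Θ) : ∃ w' ∈ weylSubmonoid Θ, w' * w = 1 := by
  induction hw using Submonoid.closure_induction with
  | mem _ h =>
    obtain ⟨α, hα, rfl⟩ := h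
    exact ⟨rootRefl α, Submonoid.subset_closure ⟨α, hα, rfl⟩, rootRefl_mul_self (hΘ α hα)⟩
  | one => exact ⟨1, one_mem _, one_mul 1⟩
  | mul w₁ w₂ _ _ ih₁ ih₂ =>
    obtain ⟨w₁', hw₁', h₁⟩ := ih₁
    obtain ⟨w₂', hw₂', h₂⟩ := ih₂
    refine ⟨w₂' * w₁', mul_mem hw₂' hw₁', ?_⟩
    rw [mul_assoc, ← mul_assoc w₁', h₁, one_mul, h₂]

namespace IsRootSystemWithBase

variable {rts pos : Set (𝔞 →ₗ[ℝ] ℝ)} {sim : Finset (𝔞 →ₗ[ℝ] ℝ)}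
  (hRS : IsRootSystemWithBase rts pos sim)

include hRS

lemma ne_zero_of_mem_pos {β : 𝔞 →ₗ[ℝ] ℝ} (hβ : β ∈ pos) : β ≠ 0 :=
  fun h => hRS.ne_zero (h ▸ hRS.pos_subset hβ)

lemma linearIndepOn : LinearIndepOn ℝ id (sim : Set (𝔞 →ₗ[ℝ] ℝ)) := hRS.indep

lemma coeff_eq_of_sum_eq_smul {α : 𝔞 →ₗ[ℝ] ℝ} (hα : α ∈ sim) {c : (𝔞 →ₗ[ℝ] ℝ) → ℝ} {a : ℝ}
    (h : ∑ σ ∈ sim, c σ • σ = a • α) : c α = a ∧ ∀ σ ∈ sim, σ ≠ α → c σ = 0 := by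
  classical
  have hsingle : ∑ σ ∈ sim, (Pi.single α a : (𝔞 →ₗ[ℝ] ℝ) → ℝ) σ • σ = a • α := by
    rw [Finset.sum_eq_single_of_mem α hα fun σ _ hσ => by simp [hσ], Pi.single_eq_same]
  have hc := linearIndepOn_finset_iffₛ.mp hRS.linearIndepOn c (Pi.single α a) (h.trans hsingle.symm)
  exact ⟨by simpa using hc α hα, fun σ hσ hσα => by simpa [hσα] using hc σ hσ⟩

lemma pos_of_smul_mem_pos {α : 𝔞 →ₗ[ℝ] ℝ} (hα : α ∈ sim) {a : ℝ} (h : a • α ∈ pos) : 0 < a := by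
  obtain ⟨c, hc₀, hc⟩ := hRS.pos_comb _ h
  have ha : c α = a := (hRS.coeff_eq_of_sum_eq_smul hα hc.symm).1
  refine (ha ▸ hc₀ α hα).lt_of_ne fun ha₀ => hRS.ne_zero_of_mem_pos h ?_
  rw [← ha₀, zero_smul]

lemma exists_eq_smul_of_add_eq_smul {α β δ : 𝔞 →ₗ[ℝ] ℝ} (hα : α ∈ sim) (hβ : β ∈ pos)
    (hδ : δ ∈ pos) {a : ℝ} (h : β + δ = a • α) : ∃ c : ℝ, β = c • α := by
  obtain ⟨c, hc₀, hc⟩ := hRS.pos_comb β hβ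
  obtain ⟨d, hd₀, hd⟩ := hRS.pos_comb δ hδ
  have hcd : ∑ σ ∈ sim, (c σ + d σ) • σ = a • α := by
    simp only [add_smul, Finset.sum_add_distrib, ← hc, ← hd, h]
  have hcoeff := (hRS.coeff_eq_of_sum_eq_smul hα hcd).2
  refine ⟨c α, hc.trans (Finset.sum_eq_single_of_mem α hα fun σ hσ hσα => ?_)⟩
  have hcdσ := hcoeff σ hσ hσα
  rw [le_antisymm (by linarith [hd₀ σ hσ]) (hc₀ σ hσ), zero_smul]

lemma mem_pos_or_neg_mem_pos {γ : 𝔞 →ₗ[ℝ] ℝ} (hγ : γ ∈ rts) : γ ∈ pos ∨ -γ ∈ pos := by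
  rw [hRS.union] at hγ
  rcases hγ with hγ | ⟨δ, hδ, rfl⟩
  · exact Or.inl hγ
  · exact Or.inr (by rwa [neg_neg])

lemma comp_rootRefl_mem_pos {α β : 𝔞 →ₗ[ℝ] ℝ} (hα : α ∈ sim) (hβ : β ∈ pos)
    (hβα : ∀ c : ℝ, β ≠ c • α) : β ∘ₗ rootRefl α ∈ pos := by
  have hrts := hRS.refl_mem α (hRS.pos_subset (hRS.sim_subset hα)) β (hRS.pos_subset hβ)
  refine (hRS.mem_pos_or_neg_mem_pos hrts).resolve_right fun hneg => ?_
  have hsum : β + -(β ∘ₗ rootRefl α) = (2 * β (rieszVec α) / α (rieszVec α)) • α := by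
    rw [comp_rootRefl]; abel
  obtain ⟨c, hc⟩ := hRS.exists_eq_smul_of_add_eq_smul hα hβ hneg hsum
  exact hβα c hc

lemma ncard_setOf_neg_rootRefl_lt {α : 𝔞 →ₗ[ℝ] ℝ} (hα : α ∈ sim) {x : 𝔞} (hx : α x < 0) :
    {β ∈ pos | β (rootRefl α x) < 0}.ncard < {β ∈ pos | β x < 0}.ncard := by
  have hα₀ := hRS.ne_zero_of_mem_pos (hRS.sim_subset hα)
  have hfin : {β ∈ pos | β x < 0}.Finite :=
    (hRS.finite.subset hRS.pos_subset).subset (Set.sep_subset _ _)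
  have hinj : Function.Injective fun β : 𝔞 →ₗ[ℝ] ℝ => β ∘ₗ rootRefl α := fun β γ h => by
    simpa only [comp_rootRefl_comp_rootRefl hα₀] using congrArg (· ∘ₗ rootRefl α) h
  have hmaps : (fun β => β ∘ₗ rootRefl α) '' {β ∈ pos | β (rootRefl α x) < 0} ⊆
      {β ∈ pos | β x < 0} \ {α} := by
    rintro _ ⟨β, ⟨hβ, hβx⟩, rfl⟩
    have hβα : ∀ c : ℝ, β ≠ c • α := by
      rintro c rfl
      have hαsx : α (rootRefl α x) = -α x := LinearMap.congr_fun (comp_rootRefl_self hα₀) x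
      have hc := hRS.pos_of_smul_mem_pos hα hβ
      rw [LinearMap.smul_apply, hαsx, smul_eq_mul] at hβx
      nlinarith
    refine ⟨⟨hRS.comp_rootRefl_mem_pos hα hβ hβα, hβx⟩, fun hβα' => hβα (-1) ?_⟩
    rw [← comp_rootRefl_comp_rootRefl hα₀ β, show β ∘ₗ rootRefl α = α from hβα',
      comp_rootRefl_self hα₀]
    exact (neg_one_smul ℝ α).symm
  calc {β ∈ pos | β (rootRefl α x) < 0}.ncard
      = ((fun β => β ∘ₗ rootRefl α) '' {β ∈ pos | β (rootRefl α x) < 0}).ncard :=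
        (Set.ncard_image_of_injective _ hinj).symm
    _ ≤ ({β ∈ pos | β x < 0} \ {α}).ncard := Set.ncard_le_ncard hmaps hfin.sdiff
    _ < {β ∈ pos | β x < 0}.ncard :=
        Set.ncard_sdiff_singleton_lt_of_mem ⟨hRS.sim_subset hα, hx⟩ hfin

lemma exists_mem_weylSubmonoid_forall_nonneg {Θ : Set (𝔞 →ₗ[ℝ] ℝ)} (hΘ : Θ ⊆ sim) (x : 𝔞) :
    ∃ w ∈ weylSubmonoid Θ, ∀ α ∈ Θ, 0 ≤ α (w x) := by
  induction hn : {β ∈ pos | β x < 0}.ncard using Nat.strong_induction_on generalizing x with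
  | _ n ih =>
  by_cases hx : ∀ α ∈ Θ, 0 ≤ α x
  · exact ⟨1, one_mem _, hx⟩
  push Not at hx
  obtain ⟨α, hαΘ, hαx⟩ := hx
  obtain ⟨w, hw, hwx⟩ :=
    ih _ (hn ▸ hRS.ncard_setOf_neg_rootRefl_lt (hΘ hαΘ) hαx) (rootRefl α x) rfl
  exact ⟨w * rootRefl α, mul_mem hw (Submonoid.subset_closure ⟨α, hαΘ, rfl⟩), hwx⟩

lemma comp_rootRefl_mem_pos_diff_rootsSpannedBy {Θ : Finset (𝔞 →ₗ[ℝ] ℝ)} (hΘ : Θ ⊆ sim)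
    {α β : 𝔞 →ₗ[ℝ] ℝ} (hα : α ∈ Θ) (hβ : β ∈ pos \ rootsSpannedBy rts Θ) :
    β ∘ₗ rootRefl α ∈ pos \ rootsSpannedBy rts Θ := by
  set V := Submodule.span ℝ (Θ : Set (𝔞 →ₗ[ℝ] ℝ))
  have hαV : α ∈ V := Submodule.subset_span hα
  have hβV : β ∉ V := fun h => hβ.2 ⟨hRS.pos_subset hβ.1, h⟩
  refine ⟨hRS.comp_rootRefl_mem_pos (hΘ hα) hβ.1 fun c hc => hβV (hc ▸ V.smul_mem c hαV),
    fun h => hβV ?_⟩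
  have := V.add_mem h.2 (V.smul_mem (2 * β (rieszVec α) / α (rieszVec α)) hαV)
  rwa [comp_rootRefl, sub_add_cancel] at this

lemma comp_mem_pos_diff_rootsSpannedBy {Θ : Finset (𝔞 →ₗ[ℝ] ℝ)} (hΘ : Θ ⊆ sim)
    {w : Module.End ℝ 𝔞} (hw : w ∈ weylSubmonoid (Θ : Set (𝔞 →ₗ[ℝ] ℝ))) {β : 𝔞 →ₗ[ℝ] ℝ}
    (hβ : β ∈ pos \ rootsSpannedBy rts Θ) : β ∘ₗ w ∈ pos \ rootsSpannedBy rts Θ := by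
  induction hw using Submonoid.closure_induction generalizing β with
  | mem _ h =>
    obtain ⟨α, hα, rfl⟩ := h
    exact hRS.comp_rootRefl_mem_pos_diff_rootsSpannedBy hΘ hα hβ
  | one => exact hβ
  | mul w₁ w₂ _ _ ih₁ ih₂ =>
    rw [Module.End.mul_eq_comp, ← LinearMap.comp_assoc]
    exact ih₂ (ih₁ hβ)

lemma mem_pos_diff_rootsSpannedBy_of_mem_sim {Θ : Finset (𝔞 →ₗ[ℝ] ℝ)} (hΘ : Θ ⊆ sim)
    {α : 𝔞 →ₗ[ℝ] ℝ} (hα : α ∈ sim) (hαΘ : α ∉ Θ) : α ∈ pos \ rootsSpannedBy rts Θ := by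
  have hsub : (Θ : Set (𝔞 →ₗ[ℝ] ℝ)) ⊆ id '' ((sim : Set (𝔞 →ₗ[ℝ] ℝ)) \ {α}) :=
    fun σ hσ => ⟨σ, ⟨hΘ hσ, by rintro rfl; exact hαΘ hσ⟩, rfl⟩
  exact ⟨hRS.sim_subset hα,
    fun h => hRS.linearIndepOn.notMem_span hα (Submodule.span_mono hsub h.2)⟩

lemma weylChamber_nonempty : (weylChamber sim).Nonempty := by
  obtain ⟨φ, hφ⟩ := Module.exists_dual_forall_apply_eq_one hRS.linearIndepOn
  refine ⟨(Module.evalEquiv ℝ 𝔞).symm φ, fun α hα => ?_⟩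
  rw [Module.apply_evalEquiv_symm_apply, ← id_eq α, hφ α hα]
  exact one_pos

lemma closure_weylChamber : closure (weylChamber sim) = {H : 𝔞 | ∀ α ∈ sim, 0 ≤ α H} :=
  closure_setOf_forall_pos sim.finite_toSet
    (fun _ hα => hRS.ne_zero_of_mem_pos (hRS.sim_subset hα)) hRS.weylChamber_nonempty

lemma nonneg_of_mem_pos {β : 𝔞 →ₗ[ℝ] ℝ} (hβ : β ∈ pos) {H : 𝔞} (hH : ∀ α ∈ sim, 0 ≤ α H) :
    0 ≤ β H := by
  obtain ⟨c, hc₀, rfl⟩ := hRS.pos_comb β hβ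
  simp only [LinearMap.sum_apply, LinearMap.smul_apply, smul_eq_mul]
  exact Finset.sum_nonneg fun α hα => mul_nonneg (hc₀ α hα) (hH α hα)

lemma setOf_pos_subset_iUnion_image {Θ : Finset (𝔞 →ₗ[ℝ] ℝ)} (hΘ : Θ ⊆ sim) :
    {H : 𝔞 | ∀ β ∈ pos \ rootsSpannedBy rts Θ, 0 < β H} ⊆
      ⋃ w ∈ weylSubmonoid (Θ : Set (𝔞 →ₗ[ℝ] ℝ)), w '' closure (weylChamber sim) := by
  intro H hH
  obtain ⟨w, hw, hwH⟩ := hRS.exists_mem_weylSubmonoid_forall_nonneg (Θ := Θ) hΘ H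
  obtain ⟨w', hw', hw'w⟩ := exists_mul_eq_one_of_mem_weylSubmonoid
    (fun _ hα => hRS.ne_zero_of_mem_pos (hRS.sim_subset (hΘ hα))) hw
  refine Set.mem_iUnion₂.2 ⟨w', hw', w H, ?_, by rw [← Module.End.mul_apply, hw'w]; rfl⟩
  rw [hRS.closure_weylChamber]
  intro α hα
  by_cases hαΘ : α ∈ Θ
  · exact hwH α hαΘ
  · exact (hH _ (hRS.comp_mem_pos_diff_rootsSpannedBy hΘ hw
      (hRS.mem_pos_diff_rootsSpannedBy_of_mem_sim hΘ hα hαΘ))).le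

lemma iUnion_image_subset_setOf_nonneg {Θ : Finset (𝔞 →ₗ[ℝ] ℝ)} (hΘ : Θ ⊆ sim) :
    ⋃ w ∈ weylSubmonoid (Θ : Set (𝔞 →ₗ[ℝ] ℝ)), w '' closure (weylChamber sim) ⊆
      {H : 𝔞 | ∀ β ∈ pos \ rootsSpannedBy rts Θ, 0 ≤ β H} := by
  refine Set.iUnion₂_subset fun w hw => ?_
  rintro _ ⟨x, hx, rfl⟩ β hβ
  rw [hRS.closure_weylChamber] at hx
  exact hRS.nonneg_of_mem_pos (hRS.comp_mem_pos_diff_rootsSpannedBy hΘ hw hβ).1 hx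

end IsRootSystemWithBase

/-- The set where all positive roots outside `⟨Θ⟩` are positive is exactly the
interior of `W_Θ · cl(𝔞⁺)`, and it is an open convex cone. -/
theorem pos_cone_eq_interior_weylSubmonoid_image (rts pos : Set (𝔞 →ₗ[ℝ] ℝ))
    (sim Θ : Finset (𝔞 →ₗ[ℝ] ℝ))
    (hRS : IsRootSystemWithBase rts pos sim) (hΘ : Θ ⊆ sim) :
    {H : 𝔞 | ∀ α ∈ pos \ rootsSpannedBy rts Θ, 0 < α H}
        = interior (⋃ w ∈ weylSubmonoid (↑Θ : Set (𝔞 →ₗ[ℝ] ℝ)),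
            ⇑w '' closure (weylChamber sim)) ∧
      IsOpen {H : 𝔞 | ∀ α ∈ pos \ rootsSpannedBy rts Θ, 0 < α H} ∧
      Convex ℝ {H : 𝔞 | ∀ α ∈ pos \ rootsSpannedBy rts Θ, 0 < α H} ∧
      ∀ c : ℝ, 0 < c → ∀ H ∈ {H : 𝔞 | ∀ α ∈ pos \ rootsSpannedBy rts Θ, 0 < α H},
        c • H ∈ {H : 𝔞 | ∀ α ∈ pos \ rootsSpannedBy rts Θ, 0 < α H} := by
  have hfin : (pos \ rootsSpannedBy rts Θ).Finite :=
    hRS.finite.subset (Set.sdiff_subset.trans hRS.pos_subset)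
  have hne : ∀ β ∈ pos \ rootsSpannedBy rts Θ, β ≠ 0 := fun _ hβ => hRS.ne_zero_of_mem_pos hβ.1
  have hopen := isOpen_setOf_forall_pos hfin
  refine ⟨(hopen.subset_interior_iff.2 (hRS.setOf_pos_subset_iUnion_image hΘ)).antisymm ?_,
    hopen, convex_setOf_forall_pos _, fun c hc H hH β hβ => ?_⟩
  · rw [← interior_setOf_forall_nonneg hfin hne]
    exact interior_mono (hRS.iUnion_image_subset_setOf_nonneg hΘ)
  · simpa using mul_pos hc (hH β hβ)

end
end
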